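/- arXiv:2402.04649 — 2 statements merged into one kernel-verified Lean document; each statement's English description precedes it below -/
import Mathlib

section
/- Let n ≥ 2 and let ν be a probability measure on S^n_+ with full support (i.e., the support of ν equals S^n_+), and suppose ν ≠ σ_+. Then there is no injective map T : S^n_+ → S^n_+ that is 1-Lipschitz with respect to the geodesic distance and satisfies T_#σ_+ = ν. -/
open MeasureTheory Real

noncomputable section

/-- Euclidean space `ℝ^{n+1}`. -/
abbrev Euc (n : ℕ) := EuclideanSpace ℝ (Fin (n + 1))

/-- The unit sphere `S^n ⊆ ℝ^{n+1}`. -/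
def unitSphere (n : ℕ) : Set (Euc n) := Metric.sphere 0 1

/-- The closed upper half-sphere `S^n_+`. -/
def upperHemi (n : ℕ) : Set (Euc n) := {x ∈ unitSphere n | 0 ≤ x (Fin.last n)}

/-- The equator `C = S^n_+ ∩ {x_{n+1} = 0}`. -/
def equator (n : ℕ) : Set (Euc n) := {x ∈ upperHemi n | x (Fin.last n) = 0}

/-- The geodesic distance on the sphere: `d(x,y) = arccos (x ⬝ y)`. -/
def geod {n : ℕ} (x y : Euc n) : ℝ := Real.arccos (inner ℝ x y)

/-- The north pole `N = (0,…,0,1)`. -/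
def northPole (n : ℕ) : Euc n := EuclideanSpace.single (Fin.last n) 1

/-- The uniform probability measure `σ_+` on the upper half-sphere, i.e. the normalized
restriction to `S^n_+` of the `n`-dimensional Hausdorff measure. -/
def sigmaPlus (n : ℕ) : Measure (Euc n) :=
  ((μH[n] : Measure (Euc n)) (upperHemi n))⁻¹ • (μH[n] : Measure (Euc n)).restrict (upperHemi n)


open Set ProbabilityTheory

/-! The measure `ν = T_#σ₊` charges every ball centred in `S^n_+` and is carried by
the compact set `T(S^n_+)`, so `T` maps `S^n_+` onto itself. On the unit sphere the chord is an
increasing function of the geodesic distance, so `T` is `1`-Lipschitz for the Euclidean metric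
and does not increase the `n`-dimensional Hausdorff measure. As every `B ⊆ S^n_+` is the image
of `S^n_+ ∩ T⁻¹ B`, this gives `σ₊ ≤ T_#σ₊`, and two comparable finite measures of the same
total mass coincide. No estimate of `μH[n](S^n_+)` is needed: `σ₊ = μH[n][|S^n_+]` has total
mass at most one whatever that value is. -/

lemma dist_le_dist_of_arccos_inner_le {E : Type*} [NormedAddCommGroup E] [InnerProductSpace ℝ E]
    {x y x' y' : E} (hx : ‖x‖ = 1) (hy : ‖y‖ = 1) (hx' : ‖x'‖ = 1) (hy' : ‖y'‖ = 1)
    (h : arccos (inner ℝ x' y') ≤ arccos (inner ℝ x y)) : dist x' y' ≤ dist x y := by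
  have mem_Icc {u v : E} (hu : ‖u‖ = 1) (hv : ‖v‖ = 1) : inner ℝ u v ∈ Icc (-1 : ℝ) 1 :=
    abs_le.1 (by simpa [hu, hv] using abs_real_inner_le_norm u v)
  have hinner : inner ℝ x y ≤ inner ℝ x' y' :=
    (strictAntiOn_arccos.le_iff_ge (mem_Icc hx' hy') (mem_Icc hx hy)).1 h
  refine (pow_le_pow_iff_left₀ dist_nonneg dist_nonneg two_ne_zero).1 ?_
  rw [dist_eq_norm, dist_eq_norm, norm_sub_sq_real, norm_sub_sq_real, hx, hy, hx', hy']
  linarith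

lemma ContinuousOn.aemeasurable_cond {X Y : Type*} [TopologicalSpace X] [MeasurableSpace X]
    [OpensMeasurableSpace X] [MeasurableSpace Y] [TopologicalSpace Y] [BorelSpace Y]
    {f : X → Y} {μ : Measure X} {s : Set X} (hf : ContinuousOn f s) (hs : MeasurableSet s) :
    AEMeasurable f μ[|s] :=
  (hf.aemeasurable hs).smul_measure _

lemma surjOn_of_subset_support_map {X Y : Type*} [TopologicalSpace X] [MeasurableSpace X]
    [TopologicalSpace Y] [T2Space Y] [MeasurableSpace Y] [OpensMeasurableSpace Y]
    {μ : Measure X} {K : Set X} {L : Set Y} {T : X → Y} (hK : IsCompact K)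
    (hT : ContinuousOn T K) (hTm : AEMeasurable T μ) (hμK : ∀ᵐ x ∂μ, x ∈ K)
    (hL : L ⊆ (μ.map T).support) : SurjOn T K L := by
  have hclosed : IsClosed (T '' K) := (hK.image_of_continuousOn hT).isClosed
  refine hL.trans (Measure.support_subset_of_isClosed hclosed ?_)
  exact (mem_ae_map_iff hTm hclosed.measurableSet).2 (hμK.mono fun x hx => ⟨x, hx, rfl⟩)

section HausdorffMeasure

variable {X : Type*} [EMetricSpace X] [MeasurableSpace X] [BorelSpace X] {d : ℝ} {K : Set X}
  {T : X → X}

lemma cond_hausdorffMeasure_le_map (hd : 0 ≤ d) (hK : MeasurableSet K)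
    (hT : LipschitzOnWith 1 T K) (hsurj : SurjOn T K K) :
    μH[d][|K] ≤ μH[d][|K].map T := by
  refine Measure.le_iff.2 fun B hB => ?_
  rw [Measure.map_apply_of_aemeasurable (hT.continuousOn.aemeasurable_cond hK) hB]
  simp only [ProbabilityTheory.cond, Measure.smul_apply, Measure.restrict_apply' hK, smul_eq_mul]
  gcongr _ * ?_
  calc μH[d] (B ∩ K) ≤ μH[d] (T '' (T ⁻¹' B ∩ K)) :=
        measure_mono fun b ⟨hbB, hbK⟩ =>
          let ⟨a, haK, hab⟩ := hsurj hbK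
          ⟨a, ⟨by rwa [mem_preimage, hab], haK⟩, hab⟩
    _ ≤ μH[d] (T ⁻¹' B ∩ K) := by
        simpa using (hT.mono inter_subset_right).hausdorffMeasure_image_le hd

lemma cond_hausdorffMeasure_map_eq (hd : 0 ≤ d) (hK : MeasurableSet K)
    (hT : LipschitzOnWith 1 T K) (hsurj : SurjOn T K K) :
    μH[d][|K].map T = μH[d][|K] := by
  refine (Measure.eq_of_le_of_measure_univ_eq
    (cond_hausdorffMeasure_le_map hd hK hT hsurj) ?_).symm
  rw [Measure.map_apply_of_aemeasurable (hT.continuousOn.aemeasurable_cond hK) .univ,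
    preimage_univ]

end HausdorffMeasure

lemma isCompact_upperHemi (n : ℕ) : IsCompact (upperHemi n) :=
  (isCompact_sphere 0 1).inter_right <|
    isClosed_le continuous_const (EuclideanSpace.proj (Fin.last n)).continuous

lemma norm_eq_one_of_mem_upperHemi {n : ℕ} {x : Euc n} (hx : x ∈ upperHemi n) : ‖x‖ = 1 :=
  mem_sphere_zero_iff_norm.1 hx.1

lemma lipschitzOnWith_one_of_geod_le {n : ℕ} {T : Euc n → Euc n}
    (hT : MapsTo T (upperHemi n) (upperHemi n))
    (h : ∀ x ∈ upperHemi n, ∀ y ∈ upperHemi n, geod (T x) (T y) ≤ geod x y) :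
    LipschitzOnWith 1 T (upperHemi n) :=
  LipschitzOnWith.of_dist_le_mul fun x hx y hy => by
    simpa using dist_le_dist_of_arccos_inner_le (norm_eq_one_of_mem_upperHemi hx)
      (norm_eq_one_of_mem_upperHemi hy) (norm_eq_one_of_mem_upperHemi (hT hx))
      (norm_eq_one_of_mem_upperHemi (hT hy)) (h x hx y hy)

theorem stmt5_general (n : ℕ) (ν : Measure (Euc n))
    (h_full : ∀ x ∈ upperHemi n, ∀ ε > (0 : ℝ), 0 < ν (Metric.ball x ε))
    (h_ne : ν ≠ sigmaPlus n) :
    ¬ ∃ T : Euc n → Euc n, (∀ x ∈ upperHemi n, T x ∈ upperHemi n) ∧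
      Set.InjOn T (upperHemi n) ∧
      (∀ x ∈ upperHemi n, ∀ y ∈ upperHemi n, geod (T x) (T y) ≤ geod x y) ∧
      Measure.map T (sigmaPlus n) = ν := by
  rintro ⟨T, hmaps, -, hgeod, rfl⟩
  have hK : MeasurableSet (upperHemi n) := (isCompact_upperHemi n).isClosed.measurableSet
  have hT := lipschitzOnWith_one_of_geod_le hmaps hgeod
  have hsurj : SurjOn T (upperHemi n) (upperHemi n) :=
    surjOn_of_subset_support_map (isCompact_upperHemi n) hT.continuousOn
      (hT.continuousOn.aemeasurable_cond hK) (ae_cond_mem hK)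
      fun x hx => Metric.nhds_basis_ball.mem_measureSupport.2 (h_full x hx)
  exact h_ne (cond_hausdorffMeasure_map_eq n.cast_nonneg hK hT hsurj)

/-- If `ν` is a probability measure with full support `S^n_+` and `ν ≠ σ_+`,
then there is no injective `1`-Lipschitz map `T : S^n_+ → S^n_+` pushing `σ_+` forward
to `ν`. -/
theorem stmt5 (n : ℕ) (hn : 2 ≤ n) (ν : Measure (Euc n)) [IsProbabilityMeasure ν]
    (h_supp : ν (upperHemi n) = 1)
    (h_full : ∀ x ∈ upperHemi n, ∀ ε > (0 : ℝ), 0 < ν (Metric.ball x ε))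
    (h_ne : ν ≠ sigmaPlus n) :
    ¬ ∃ T : Euc n → Euc n, (∀ x ∈ upperHemi n, T x ∈ upperHemi n) ∧
      Set.InjOn T (upperHemi n) ∧
      (∀ x ∈ upperHemi n, ∀ y ∈ upperHemi n, geod (T x) (T y) ≤ geod x y) ∧
      Measure.map T (sigmaPlus n) = ν :=
  stmt5_general n ν h_full h_ne

end
end

section
/- Let n ≥ 2. For every L > 0 there exists a probability measure ν on S^n_+ with a positive continuous density with respect to σ_+ such that there is no bijective map T : S^n_+ → S^n_+ which is L-Lipschitz with respect to the geodesic distance and satisfies T_#σ_+ = ν. In other words, no uniform Lipschitz bound holds for bijective transport maps from σ_+ onto probability measures with positive continuous densities on the half-sphere. -/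
/-!
Let `T` be onto and `L`-Lipschitz with `T_# σ_+ = ν`, and pick `x₀` with `T x₀ = e₁`, a point of
the equator. Then `T` maps the geodesic ball `B(x₀, r)` into `B(e₁, L r)`, so
`ν (B(e₁, L r)) ≥ σ_+ (B(x₀, r))`. The right-hand side is bounded below by some `κ(r) > 0`
independently of `x₀`: the orthogonal projection onto the equatorial disc is `1`-Lipschitz and maps
`S^n_+ ∩ B(x₀, r)` onto a set containing a Euclidean disc of radius `≈ r²`. Once `L r ≤ π / 4`,
the density `ε + c · max (x_{n+1} - √2/2, 0)` (normalized) gives `B(e₁, π / 4)` mass at most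
`ε`, since that ball lies in `{x_{n+1} ≤ √2/2}`; choosing `ε < κ(r)` gives the contradiction.
-/

open MeasureTheory Real

noncomputable section

open Metric Set
open scoped NNReal ENNReal

lemma abs_sqrt_sub_sqrt_mul_add {a b : ℝ} (ha : 0 ≤ a) (hb : 0 ≤ b) :
    |√a - √b| * (√a + √b) = |a - b| := by
  rw [← abs_of_nonneg (by positivity : 0 ≤ √a + √b), ← abs_mul,
    show (√a - √b) * (√a + √b) = √a ^ 2 - √b ^ 2 by ring, Real.sq_sqrt ha, Real.sq_sqrt hb]

lemma abs_norm_sq_sub_norm_sq_le {E : Type*} [SeminormedAddCommGroup E] {u v : E}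
    (hu : ‖u‖ ≤ 1) (hv : ‖v‖ ≤ 1) : |‖u‖ ^ 2 - ‖v‖ ^ 2| ≤ 2 * dist u v := by
  have h := abs_norm_sub_norm_le u v
  rw [← dist_eq_norm] at h
  calc |‖u‖ ^ 2 - ‖v‖ ^ 2| = |‖u‖ - ‖v‖| * (‖u‖ + ‖v‖) := by
        rw [← abs_of_nonneg (by positivity : 0 ≤ ‖u‖ + ‖v‖), ← abs_mul]; ring_nf
    _ ≤ dist u v * 2 := by gcongr; linarith
    _ = 2 * dist u v := mul_comm _ _

lemma isProbabilityMeasure_withDensity_ofReal {X : Type*} [MeasurableSpace X] {μ : Measure X}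
    {g : X → ℝ} (hg : Integrable g μ) (hg0 : 0 ≤ᵐ[μ] g) (h1 : ∫ x, g x ∂μ = 1) :
    IsProbabilityMeasure (μ.withDensity fun x => ENNReal.ofReal (g x)) :=
  ⟨by rw [withDensity_apply _ MeasurableSet.univ, Measure.restrict_univ,
    ← ofReal_integral_eq_lintegral_ofReal hg hg0, h1, ENNReal.ofReal_one]⟩

section UpperHemisphere

variable {n : ℕ}

lemma mem_upperHemi_iff {x : Euc n} : x ∈ upperHemi n ↔ ‖x‖ = 1 ∧ 0 ≤ x (Fin.last n) := by
  simp [upperHemi, unitSphere]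

def dropLast (n : ℕ) (x : Euc n) : EuclideanSpace ℝ (Fin n) :=
  WithLp.toLp 2 fun i => x (Fin.castSucc i)

def hemiGraph (n : ℕ) (u : EuclideanSpace ℝ (Fin n)) : Euc n :=
  WithLp.toLp 2 (Fin.snoc u.ofLp (√(1 - ‖u‖ ^ 2)))

@[simp] lemma dropLast_apply (x : Euc n) (i : Fin n) : dropLast n x i = x (Fin.castSucc i) := rfl

@[simp] lemma hemiGraph_castSucc (u : EuclideanSpace ℝ (Fin n)) (i : Fin n) :
    hemiGraph n u (Fin.castSucc i) = u i := by
  simp [hemiGraph]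

@[simp] lemma hemiGraph_last (u : EuclideanSpace ℝ (Fin n)) :
    hemiGraph n u (Fin.last n) = √(1 - ‖u‖ ^ 2) := by
  simp [hemiGraph]

lemma dist_sq_eq_dist_dropLast_sq_add (x y : Euc n) :
    dist x y ^ 2 = dist (dropLast n x) (dropLast n y) ^ 2
      + (x (Fin.last n) - y (Fin.last n)) ^ 2 := by
  simp only [EuclideanSpace.dist_eq, Real.dist_eq, sq_abs, Fin.sum_univ_castSucc, dropLast_apply]
  rw [Real.sq_sqrt (by positivity), Real.sq_sqrt (by positivity)]

@[simp] lemma dropLast_zero : dropLast n 0 = 0 := rfl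

lemma norm_sq_eq_norm_dropLast_sq_add (x : Euc n) :
    ‖x‖ ^ 2 = ‖dropLast n x‖ ^ 2 + x (Fin.last n) ^ 2 := by
  simpa using dist_sq_eq_dist_dropLast_sq_add x 0

lemma lipschitzWith_dropLast : LipschitzWith 1 (dropLast n) :=
  LipschitzWith.of_dist_le_mul fun x y => by
    rw [NNReal.coe_one, one_mul, ← pow_le_pow_iff_left₀ dist_nonneg dist_nonneg two_ne_zero,
      dist_sq_eq_dist_dropLast_sq_add x y]
    exact le_add_of_nonneg_right (sq_nonneg _)

lemma norm_dropLast_le (x : Euc n) : ‖dropLast n x‖ ≤ ‖x‖ := by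
  simpa using lipschitzWith_dropLast.dist_le_mul x 0

lemma dropLast_hemiGraph (u : EuclideanSpace ℝ (Fin n)) : dropLast n (hemiGraph n u) = u := by
  ext i
  simp

lemma last_eq_sqrt_of_mem_upperHemi {x : Euc n} (hx : x ∈ upperHemi n) :
    x (Fin.last n) = √(1 - ‖dropLast n x‖ ^ 2) := by
  obtain ⟨h1, h0⟩ := mem_upperHemi_iff.mp hx
  have := norm_sq_eq_norm_dropLast_sq_add x
  rw [h1] at this
  rw [show 1 - ‖dropLast n x‖ ^ 2 = x (Fin.last n) ^ 2 by linarith, Real.sqrt_sq h0]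

lemma hemiGraph_dropLast {x : Euc n} (hx : x ∈ upperHemi n) : hemiGraph n (dropLast n x) = x := by
  ext i
  induction i using Fin.lastCases with
  | last => rw [hemiGraph_last, last_eq_sqrt_of_mem_upperHemi hx]
  | cast i => simp

lemma hemiGraph_mem_upperHemi {u : EuclideanSpace ℝ (Fin n)} (hu : ‖u‖ ≤ 1) :
    hemiGraph n u ∈ upperHemi n := by
  refine mem_upperHemi_iff.mpr ⟨?_, by simp [Real.sqrt_nonneg]⟩
  have h := norm_sq_eq_norm_dropLast_sq_add (hemiGraph n u)
  rw [dropLast_hemiGraph, hemiGraph_last, Real.sq_sqrt (by nlinarith [norm_nonneg u])] at h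
  nlinarith [norm_nonneg (hemiGraph n u)]

section

variable {u v : EuclideanSpace ℝ (Fin n)}

lemma abs_sqrt_one_sub_norm_sq_sub_mul_le (hu : ‖u‖ ≤ 1) (hv : ‖v‖ ≤ 1) :
    |√(1 - ‖u‖ ^ 2) - √(1 - ‖v‖ ^ 2)| * (√(1 - ‖u‖ ^ 2) + √(1 - ‖v‖ ^ 2)) ≤ 2 * dist u v := by
  rw [abs_sqrt_sub_sqrt_mul_add (by nlinarith [norm_nonneg u]) (by nlinarith [norm_nonneg v]),
    show 1 - ‖u‖ ^ 2 - (1 - ‖v‖ ^ 2) = ‖v‖ ^ 2 - ‖u‖ ^ 2 by ring, dist_comm]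
  exact abs_norm_sq_sub_norm_sq_le hv hu

lemma dist_hemiGraph_sq_le (hu : ‖u‖ ≤ 1) (hv : ‖v‖ ≤ 1) :
    dist (hemiGraph n u) (hemiGraph n v) ^ 2 ≤ dist u v ^ 2 + 2 * dist u v := by
  rw [dist_sq_eq_dist_dropLast_sq_add, dropLast_hemiGraph, dropLast_hemiGraph, hemiGraph_last,
    hemiGraph_last]
  have h := abs_sqrt_one_sub_norm_sq_sub_mul_le hu hv
  have hle : |√(1 - ‖u‖ ^ 2) - √(1 - ‖v‖ ^ 2)| ≤ √(1 - ‖u‖ ^ 2) + √(1 - ‖v‖ ^ 2) :=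
    abs_sub_le_iff.mpr ⟨by linarith [Real.sqrt_nonneg (1 - ‖v‖ ^ 2)],
      by linarith [Real.sqrt_nonneg (1 - ‖u‖ ^ 2)]⟩
  rw [← sq_abs (√(1 - ‖u‖ ^ 2) - _)]
  nlinarith [abs_nonneg (√(1 - ‖u‖ ^ 2) - √(1 - ‖v‖ ^ 2))]

lemma lipschitzOnWith_hemiGraph {c : ℝ≥0} (hc : 0 < c) :
    LipschitzOnWith (1 + c⁻¹) (hemiGraph n) {u | ‖u‖ ≤ 1 ∧ c ≤ √(1 - ‖u‖ ^ 2)} := by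
  refine LipschitzOnWith.of_dist_le_mul fun u ⟨hu, hcu⟩ v ⟨hv, hcv⟩ => ?_
  have hc' : (0 : ℝ) < c := hc
  have h := abs_sqrt_one_sub_norm_sq_sub_mul_le hu hv
  have hheight : |√(1 - ‖u‖ ^ 2) - √(1 - ‖v‖ ^ 2)| ≤ (c : ℝ)⁻¹ * dist u v := by
    rw [le_inv_mul_iff₀ hc']
    nlinarith [abs_nonneg (√(1 - ‖u‖ ^ 2) - √(1 - ‖v‖ ^ 2))]
  rw [← pow_le_pow_iff_left₀ dist_nonneg (by positivity) two_ne_zero,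
    dist_sq_eq_dist_dropLast_sq_add, dropLast_hemiGraph, dropLast_hemiGraph, hemiGraph_last,
    hemiGraph_last, ← sq_abs (√(1 - ‖u‖ ^ 2) - _)]
  push_cast
  have hd := dist_nonneg (x := u) (y := v)
  have hci : 0 ≤ (c : ℝ)⁻¹ * dist u v := by positivity
  nlinarith [pow_le_pow_left₀ (abs_nonneg _) hheight 2, mul_nonneg hci hd]

end

lemma hausdorffMeasure_closedBall_le_upperHemi_inter {x₀ : Euc n} (hx₀ : x₀ ∈ upperHemi n)
    {δ : ℝ} (hδ0 : 0 < δ) (hδ1 : δ ≤ 1) :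
    μH[n] (closedBall (0 : EuclideanSpace ℝ (Fin n)) (δ ^ 2 / 6))
      ≤ μH[n] (upperHemi n ∩ closedBall x₀ δ) := by
  set s := δ ^ 2 / 3
  have hs0 : 0 < s := by positivity
  have hs1 : s ≤ 1 / 3 := by simp only [s]; nlinarith
  set p := dropLast n x₀
  have hp : ‖p‖ ≤ 1 := (norm_dropLast_le x₀).trans (mem_upperHemi_iff.mp hx₀).1.le
  -- shrinking `p` towards `0` makes room for a whole ball of radius `s / 2` inside the unit disc
  set q := (1 - s / 2) • p
  have hqp : dist q p ≤ s / 2 := by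
    rw [dist_eq_norm, show q - p = (-(s / 2)) • p by simp only [q]; module, norm_smul,
      Real.norm_eq_abs, abs_neg, abs_of_pos (by positivity)]
    nlinarith
  have hq : ‖q‖ ≤ 1 - s / 2 := by
    rw [norm_smul, Real.norm_eq_abs, abs_of_nonneg (by linarith)]
    nlinarith [norm_nonneg p]
  have hgraph : hemiGraph n '' closedBall q (s / 2) ⊆ upperHemi n ∩ closedBall x₀ δ := by
    rintro - ⟨u, hu, rfl⟩
    rw [mem_closedBall] at hu
    have hu1 : ‖u‖ ≤ 1 := by
      have := norm_le_norm_add_norm_sub' u q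
      rw [← dist_eq_norm] at this
      linarith
    have hup : dist u p ≤ s := by linarith [dist_triangle u q p]
    refine ⟨hemiGraph_mem_upperHemi hu1, ?_⟩
    rw [mem_closedBall, ← hemiGraph_dropLast hx₀, ← pow_le_pow_iff_left₀ dist_nonneg hδ0.le
      two_ne_zero]
    change dist (hemiGraph n u) (hemiGraph n p) ^ 2 ≤ δ ^ 2
    have hδs : δ ^ 2 = 3 * s := by simp only [s]; ring
    nlinarith [dist_hemiGraph_sq_le hu1 hp, dist_nonneg (x := u) (y := p)]
  calc μH[n] (closedBall (0 : EuclideanSpace ℝ (Fin n)) (δ ^ 2 / 6))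
      = μH[n] (closedBall q (s / 2)) := by
        rw [Measure.addHaar_closedBall_center _ q, show s / 2 = δ ^ 2 / 6 by ring]
    _ = μH[n] (dropLast n '' (hemiGraph n '' closedBall q (s / 2))) := by
        rw [image_image]; simp only [dropLast_hemiGraph, image_id']
    _ ≤ μH[n] (hemiGraph n '' closedBall q (s / 2)) := by
        simpa using lipschitzWith_dropLast.hausdorffMeasure_image_le (Nat.cast_nonneg n) _
    _ ≤ μH[n] (upperHemi n ∩ closedBall x₀ δ) := measure_mono hgraph

lemma hausdorffMeasure_sphere_cap_lt_top {c : ℝ≥0} (hc : 0 < c) :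
    μH[n] {x ∈ unitSphere n | (c : ℝ) ≤ x (Fin.last n)} < ⊤ := by
  set D := {u : EuclideanSpace ℝ (Fin n) | ‖u‖ ≤ 1 ∧ c ≤ √(1 - ‖u‖ ^ 2)}
  have hcover : {x ∈ unitSphere n | (c : ℝ) ≤ x (Fin.last n)} ⊆ hemiGraph n '' D := by
    rintro x ⟨hx, hcx⟩
    have hxH : x ∈ upperHemi n := ⟨hx, c.coe_nonneg.trans hcx⟩
    have hx1 := (mem_upperHemi_iff.mp hxH).1
    refine ⟨dropLast n x, ⟨hx1 ▸ norm_dropLast_le x, ?_⟩, hemiGraph_dropLast hxH⟩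
    rwa [← last_eq_sqrt_of_mem_upperHemi hxH]
  calc μH[n] {x ∈ unitSphere n | (c : ℝ) ≤ x (Fin.last n)}
      ≤ μH[n] (hemiGraph n '' D) := measure_mono hcover
    _ ≤ ((1 + c⁻¹ : ℝ≥0) : ℝ≥0∞) ^ (n : ℝ) * μH[n] D :=
        (lipschitzOnWith_hemiGraph hc).hausdorffMeasure_image_le (Nat.cast_nonneg n)
    _ ≤ ((1 + c⁻¹ : ℝ≥0) : ℝ≥0∞) ^ (n : ℝ)
          * μH[n] (closedBall (0 : EuclideanSpace ℝ (Fin n)) 1) := by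
        gcongr
        intro u hu
        simpa using hu.1
    _ < ⊤ := ENNReal.mul_lt_top (by simp) (isCompact_closedBall _ _).measure_lt_top

lemma exists_inv_le_sq_apply {x : Euc n} (hx : ‖x‖ = 1) : ∃ j, ((n : ℝ) + 1)⁻¹ ≤ x j ^ 2 := by
  have hsum : ∑ _j : Fin (n + 1), ((n : ℝ) + 1)⁻¹ ≤ ∑ j, x j ^ 2 := by
    rw [← EuclideanSpace.real_norm_sq_eq, hx, Finset.sum_const, Finset.card_univ, Fintype.card_fin,
      nsmul_eq_mul]
    push_cast
    rw [mul_inv_cancel₀ (by positivity), one_pow]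
  obtain ⟨j, -, hj⟩ := Finset.exists_le_of_sum_le Finset.univ_nonempty hsum
  exact ⟨j, hj⟩

-- The sphere is covered by the `2 (n + 1)` caps `± x_j ≥ (n + 1)^(-1/2)`, all isometric to one
-- graph over a disc.
lemma hausdorffMeasure_unitSphere_lt_top : μH[n] (unitSphere n) < ⊤ := by
  set c : ℝ≥0 := NNReal.sqrt (n + 1)⁻¹
  set C := {x ∈ unitSphere n | (c : ℝ) ≤ x (Fin.last n)}
  let A : Fin (n + 1) → Euc n ≃ₗᵢ[ℝ] Euc n := fun j =>
    LinearIsometryEquiv.piLpCongrLeft 2 ℝ ℝ (Equiv.swap (Fin.last n) j)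
  have hA : ∀ j x, A j x (Fin.last n) = x j := fun j x => by
    simp [A, LinearIsometryEquiv.piLpCongrLeft_apply, Equiv.piCongrLeft'_apply]
  have hcover : unitSphere n ⊆ ⋃ j, (A j ⁻¹' C ∪ A j ⁻¹' (-C)) := by
    intro x hx
    have hx1 : ‖x‖ = 1 := by simpa [unitSphere] using hx
    obtain ⟨j, hj⟩ := exists_inv_le_sq_apply hx1
    have hcj : (c : ℝ) ≤ |x j| := by
      rw [← Real.sqrt_sq_eq_abs]
      simpa [c] using Real.sqrt_le_sqrt hj
    refine mem_iUnion.mpr ⟨j, ?_⟩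
    rcases le_abs'.mp hcj with hneg | hpos
    · refine Or.inr ⟨by simpa [unitSphere] using hx1, ?_⟩
      rw [← map_neg, hA, PiLp.neg_apply]
      linarith
    · exact Or.inl ⟨by simpa [unitSphere] using hx1, by rw [hA]; exact hpos⟩
  have hC : μH[n] C < ⊤ := hausdorffMeasure_sphere_cap_lt_top (by positivity)
  have hnegC : μH[n] (-C) = μH[n] C :=
    (IsometryEquiv.neg (Euc n)).hausdorffMeasure_preimage _ C
  refine (measure_mono hcover).trans_lt ((measure_iUnion_fintype_le _ _).trans_lt ?_)
  refine ENNReal.sum_lt_top.mpr fun j _ => (measure_union_le _ _).trans_lt ?_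
  have hAj := (A j).toIsometryEquiv.hausdorffMeasure_preimage n
  simp only [LinearIsometryEquiv.coe_toIsometryEquiv] at hAj
  rw [hAj, hAj, hnegC]
  exact ENNReal.add_lt_top.mpr ⟨hC, hC⟩

lemma northPole_mem_upperHemi : northPole n ∈ upperHemi n :=
  mem_upperHemi_iff.mpr ⟨by simp [northPole], by simp [northPole]⟩

lemma measurableSet_upperHemi : MeasurableSet (upperHemi n) :=
  (isClosed_sphere.inter (isClosed_le continuous_const (by fun_prop) :
    IsClosed {x : Euc n | 0 ≤ x (Fin.last n)})).measurableSet

lemma hausdorffMeasure_upperHemi_lt_top : μH[n] (upperHemi n) < ⊤ :=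
  (measure_mono fun _ hx => hx.1).trans_lt hausdorffMeasure_unitSphere_lt_top

lemma hausdorffMeasure_upperHemi_pos : 0 < μH[n] (upperHemi n) :=
  (measure_closedBall_pos _ _ (by norm_num)).trans_le
    ((hausdorffMeasure_closedBall_le_upperHemi_inter northPole_mem_upperHemi one_pos le_rfl).trans
      (measure_mono inter_subset_left))

lemma sigmaPlus_apply {S : Set (Euc n)} (hS : MeasurableSet S) :
    sigmaPlus n S = (μH[n] (upperHemi n))⁻¹ * μH[n] (S ∩ upperHemi n) := by
  rw [sigmaPlus, Measure.smul_apply, Measure.restrict_apply hS, smul_eq_mul]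

instance : IsProbabilityMeasure (sigmaPlus n) := by
  constructor
  rw [sigmaPlus_apply MeasurableSet.univ, univ_inter]
  exact ENNReal.inv_mul_cancel hausdorffMeasure_upperHemi_pos.ne'
    hausdorffMeasure_upperHemi_lt_top.ne

lemma ae_mem_upperHemi_sigmaPlus : ∀ᵐ x ∂sigmaPlus n, x ∈ upperHemi n := by
  rw [ae_iff, ← compl_def, sigmaPlus_apply measurableSet_upperHemi.compl, compl_inter_self,
    measure_empty, mul_zero]

lemma exists_pos_forall_le_sigmaPlus_closedBall {δ : ℝ} (hδ : 0 < δ) :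
    ∃ κ > 0, ∀ x₀ ∈ upperHemi n, κ ≤ sigmaPlus n (closedBall x₀ δ) := by
  set δ' := min δ 1
  have hδ' : 0 < δ' := lt_min hδ one_pos
  refine ⟨(μH[n] (upperHemi n))⁻¹ * μH[n] (closedBall (0 : EuclideanSpace ℝ (Fin n)) (δ' ^ 2 / 6)),
    ENNReal.mul_pos (ENNReal.inv_ne_zero.mpr hausdorffMeasure_upperHemi_lt_top.ne)
      (measure_closedBall_pos _ _ (by positivity)).ne', fun x₀ hx₀ => ?_⟩
  rw [sigmaPlus_apply measurableSet_closedBall, inter_comm]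
  gcongr
  exact (hausdorffMeasure_closedBall_le_upperHemi_inter hx₀ hδ' (min_le_right _ _)).trans
    (measure_mono (inter_subset_inter_right _ (closedBall_subset_closedBall (min_le_left _ _))))

lemma single_zero_mem_upperHemi : EuclideanSpace.single 0 1 ∈ upperHemi n := by
  refine mem_upperHemi_iff.mpr ⟨by simp, ?_⟩
  rw [PiLp.single_apply]
  split_ifs <;> norm_num

lemma geod_nonneg (x y : Euc n) : 0 ≤ geod x y := Real.arccos_nonneg _

lemma continuous_geod_left (y : Euc n) : Continuous fun x => geod x y :=
  Real.continuous_arccos.comp (continuous_id.inner continuous_const)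

lemma geod_le_of_cos_le_inner {x y : Euc n} {r : ℝ} (hr0 : 0 ≤ r) (hrπ : r ≤ π)
    (h : cos r ≤ inner ℝ x y) : geod x y ≤ r :=
  (Real.arccos_le_arccos h).trans_eq (Real.arccos_cos hr0 hrπ)

lemma exists_pos_forall_le_sigmaPlus_geod_le {r : ℝ} (hr : 0 < r) (hrπ : r ≤ π) :
    ∃ κ > 0, ∀ x₀ ∈ upperHemi n, κ ≤ sigmaPlus n {x ∈ upperHemi n | geod x x₀ ≤ r} := by
  have hcos : cos r < 1 := cos_zero ▸ Real.cos_lt_cos_of_nonneg_of_le_pi le_rfl hrπ hr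
  obtain ⟨κ, hκ, hball⟩ := exists_pos_forall_le_sigmaPlus_closedBall (n := n)
    (Real.sqrt_pos.mpr (by linarith : 0 < 2 * (1 - cos r)))
  refine ⟨κ, hκ, fun x₀ hx₀ => (hball x₀ hx₀).trans (measure_mono_ae ?_)⟩
  filter_upwards [ae_mem_upperHemi_sigmaPlus] with x hx hxB
  refine ⟨hx, geod_le_of_cos_le_inner hr.le hrπ ?_⟩
  have hd : ‖x - x₀‖ ^ 2 ≤ 2 * (1 - cos r) := by
    rw [← Real.sq_sqrt (by linarith : 0 ≤ 2 * (1 - cos r)), ← dist_eq_norm]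
    exact pow_le_pow_left₀ dist_nonneg hxB 2
  rw [norm_sub_sq_real, (mem_upperHemi_iff.mp hx).1, (mem_upperHemi_iff.mp hx₀).1] at hd
  linarith

lemma sigmaPlus_le_map_geod_le {T : Euc n → Euc n} {L : ℝ} (hL : 0 ≤ L)
    (hlip : ∀ x ∈ upperHemi n, ∀ y ∈ upperHemi n, geod (T x) (T y) ≤ L * geod x y)
    (hT : AEMeasurable T (sigmaPlus n)) {x₀ : Euc n} (hx₀ : x₀ ∈ upperHemi n) (r : ℝ) :
    sigmaPlus n {x ∈ upperHemi n | geod x x₀ ≤ r}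
      ≤ (sigmaPlus n).map T {y | geod y (T x₀) ≤ L * r} := by
  rw [Measure.map_apply_of_aemeasurable hT
    (measurableSet_le (continuous_geod_left _).measurable measurable_const)]
  exact measure_mono fun x ⟨hx, hxr⟩ => (hlip x hx x₀ hx₀).trans (by gcongr)

lemma last_le_of_geod_single_zero_le (hn : n ≠ 0) {y : Euc n} (hy : ‖y‖ = 1)
    (h : geod y (EuclideanSpace.single 0 1) ≤ π / 4) : y (Fin.last n) ≤ √2 / 2 := by
  rw [geod, Real.arccos_le_pi_div_four, EuclideanSpace.inner_single_right] at h
  simp only [one_mul, conj_trivial] at h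
  have hpair : y 0 ^ 2 + y (Fin.last n) ^ 2 ≤ 1 := by
    have hne : (0 : Fin (n + 1)) ≠ Fin.last n := by simp [Fin.ext_iff, hn.symm]
    calc y 0 ^ 2 + y (Fin.last n) ^ 2 = ∑ j ∈ {0, Fin.last n}, y j ^ 2 := by
          rw [Finset.sum_pair hne]
      _ ≤ ∑ j, y j ^ 2 := Finset.sum_le_univ_sum_of_nonneg fun _ => sq_nonneg _
      _ = 1 := by rw [← EuclideanSpace.real_norm_sq_eq, hy, one_pow]
  have h2 : (√2 / 2) ^ 2 = 1 / 2 := by rw [div_pow, Real.sq_sqrt zero_le_two]; norm_num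
  nlinarith [Real.sqrt_nonneg 2]

def polarBump (n : ℕ) (x : Euc n) : ℝ := max (x (Fin.last n) - √2 / 2) 0

lemma continuous_polarBump : Continuous (polarBump n) := by
  unfold polarBump; fun_prop

lemma polarBump_nonneg (x : Euc n) : 0 ≤ polarBump n x := le_max_right _ _

lemma polarBump_eq_zero {x : Euc n} (hx : x (Fin.last n) ≤ √2 / 2) : polarBump n x = 0 :=
  max_eq_right (by linarith)

lemma integrable_polarBump : Integrable (polarBump n) (sigmaPlus n) := by
  refine Integrable.of_bound continuous_polarBump.aestronglyMeasurable 1 ?_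
  filter_upwards [ae_mem_upperHemi_sigmaPlus] with x hx
  have hlast : x (Fin.last n) ≤ 1 :=
    (le_abs_self _).trans ((PiLp.norm_apply_le x _).trans (mem_upperHemi_iff.mp hx).1.le)
  rw [Real.norm_of_nonneg (polarBump_nonneg x)]
  exact max_le (by linarith [Real.sqrt_nonneg 2]) zero_le_one

lemma integral_polarBump_pos : 0 < ∫ x, polarBump n x ∂sigmaPlus n := by
  rw [integral_pos_iff_support_of_nonneg polarBump_nonneg integrable_polarBump]
  obtain ⟨κ, hκ, hball⟩ :=
    exists_pos_forall_le_sigmaPlus_closedBall (n := n) (δ := 1 / 10) (by norm_num)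
  refine hκ.trans_le ((hball _ northPole_mem_upperHemi).trans (measure_mono fun x hx => ?_))
  have hdist : |x (Fin.last n) - 1| ≤ 1 / 10 := by
    simpa [northPole] using
      (PiLp.norm_apply_le (x - northPole n) (Fin.last n)).trans (mem_closedBall_iff_norm.mp hx)
  have hsqrt2 : √2 < 1.8 := by
    rw [Real.sqrt_lt' (by norm_num)]; norm_num
  rw [Function.mem_support, polarBump]
  exact (lt_max_of_lt_left (by linarith [(abs_le.mp hdist).1])).ne'

def polarDensity (n : ℕ) (ε : ℝ) (x : Euc n) : ℝ :=
  ε + (1 - ε) / (∫ y, polarBump n y ∂sigmaPlus n) * polarBump n x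

section

variable {ε : ℝ}

lemma continuous_polarDensity : Continuous (polarDensity n ε) := by
  unfold polarDensity; have := continuous_polarBump (n := n); fun_prop

lemma polarDensity_pos (hε0 : 0 < ε) (hε1 : ε ≤ 1) (x : Euc n) : 0 < polarDensity n ε x :=
  add_pos_of_pos_of_nonneg hε0 (mul_nonneg
    (div_nonneg (by linarith) integral_polarBump_pos.le) (polarBump_nonneg x))

lemma polarDensity_eq {x : Euc n} (hx : x (Fin.last n) ≤ √2 / 2) : polarDensity n ε x = ε := by
  rw [polarDensity, polarBump_eq_zero hx, mul_zero, add_zero]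

lemma integral_polarDensity : ∫ x, polarDensity n ε x ∂sigmaPlus n = 1 := by
  unfold polarDensity
  rw [integral_add (integrable_const _) (integrable_polarBump.const_mul _), integral_const,
    integral_const_mul, div_mul_cancel₀ _ integral_polarBump_pos.ne']
  simp

lemma isProbabilityMeasure_withDensity_polarDensity (hε0 : 0 < ε) (hε1 : ε ≤ 1) :
    IsProbabilityMeasure ((sigmaPlus n).withDensity fun x => ENNReal.ofReal (polarDensity n ε x)) :=
  isProbabilityMeasure_withDensity_ofReal
    ((integrable_const _).add (integrable_polarBump.const_mul _))
    (ae_of_all _ fun x => (polarDensity_pos hε0 hε1 x).le) integral_polarDensity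

lemma withDensity_polarDensity_geod_single_zero_le (hn : n ≠ 0) :
    (sigmaPlus n).withDensity (fun x => ENNReal.ofReal (polarDensity n ε x))
      {y | geod y (EuclideanSpace.single 0 1) ≤ π / 4} ≤ ENNReal.ofReal ε := by
  set B := {y : Euc n | geod y (EuclideanSpace.single 0 1) ≤ π / 4}
  rw [withDensity_apply _ (measurableSet_le (continuous_geod_left _).measurable measurable_const)]
  calc ∫⁻ x in B, ENNReal.ofReal (polarDensity n ε x) ∂sigmaPlus n
      ≤ ∫⁻ _ in B, ENNReal.ofReal ε ∂sigmaPlus n := by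
        refine setLIntegral_mono_ae aemeasurable_const ?_
        filter_upwards [ae_mem_upperHemi_sigmaPlus] with x hx hxB
        rw [polarDensity_eq (last_le_of_geod_single_zero_le hn (mem_upperHemi_iff.mp hx).1 hxB)]
    _ = ENNReal.ofReal ε * sigmaPlus n B := setLIntegral_const _ _
    _ ≤ ENNReal.ofReal ε := mul_le_of_le_one_right' prob_le_one

end

end UpperHemisphere

theorem stmt17_general (n : ℕ) (hn : 2 ≤ n) (L : ℝ) :
    ∃ ν : Measure (Euc n), IsProbabilityMeasure ν ∧
      (∃ g : Euc n → ℝ, ContinuousOn g (upperHemi n) ∧ (∀ x ∈ upperHemi n, 0 < g x) ∧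
        ν = (sigmaPlus n).withDensity (fun x => ENNReal.ofReal (g x))) ∧
      ¬ ∃ T : Euc n → Euc n, (∀ x ∈ upperHemi n, T x ∈ upperHemi n) ∧
        Set.InjOn T (upperHemi n) ∧
        (∀ y ∈ upperHemi n, ∃ x ∈ upperHemi n, T x = y) ∧
        (∀ x ∈ upperHemi n, ∀ y ∈ upperHemi n, geod (T x) (T y) ≤ L * geod x y) ∧
        Measure.map T (sigmaPlus n) = ν := by
  set K := max L 1
  have hK : 0 < K := lt_max_of_lt_right one_pos
  obtain ⟨κ, hκ, hlow⟩ := exists_pos_forall_le_sigmaPlus_geod_le (n := n) (r := π / (4 * K))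
    (by positivity) (div_le_self pi_pos.le (by linarith [le_max_right L 1]))
  obtain ⟨ε, hε0, hεκ, hε1⟩ : ∃ ε : ℝ, 0 < ε ∧ ENNReal.ofReal ε < κ ∧ ε ≤ 1 := by
    obtain ⟨ε, -, hε0, hεκ⟩ := ENNReal.lt_iff_exists_real_btwn.mp (lt_min hκ one_pos)
    exact ⟨ε, ENNReal.ofReal_pos.mp hε0, hεκ.trans_le (min_le_left _ _),
      (ENNReal.ofReal_lt_one.mp (hεκ.trans_le (min_le_right _ _))).le⟩
  have hν := isProbabilityMeasure_withDensity_polarDensity (n := n) hε0 hε1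
  refine ⟨_, hν, ⟨polarDensity n ε, continuous_polarDensity.continuousOn,
    fun x _ => polarDensity_pos hε0 hε1 x, rfl⟩, ?_⟩
  rintro ⟨T, -, -, hsurj, hlip, hmap⟩
  have hT : AEMeasurable T (sigmaPlus n) := .of_map_ne_zero (hmap ▸ hν.ne_zero)
  have hlipK : ∀ x ∈ upperHemi n, ∀ y ∈ upperHemi n, geod (T x) (T y) ≤ K * geod x y :=
    fun x hx y hy => (hlip x hx y hy).trans (by gcongr; exacts [geod_nonneg x y, le_max_left L 1])
  obtain ⟨x₀, hx₀, hTx₀⟩ := hsurj _ single_zero_mem_upperHemi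
  have hball := (hlow x₀ hx₀).trans (sigmaPlus_le_map_geod_le hK.le hlipK hT hx₀ _)
  rw [hmap, hTx₀, show K * (π / (4 * K)) = π / 4 by field_simp] at hball
  exact (hball.trans (withDensity_polarDensity_geod_single_zero_le (by omega))).not_gt hεκ

/-- No uniform Lipschitz bound holds for bijective transport maps from
`σ_+` onto probability measures with positive continuous densities on the half-sphere: for
every `L > 0` there is a probability measure `ν` with a positive continuous density w.r.t.
`σ_+` such that no bijective `L`-Lipschitz map `T : S^n_+ → S^n_+` pushes `σ_+` to `ν`. -/
theorem stmt17 (n : ℕ) (hn : 2 ≤ n) (L : ℝ) (hL : 0 < L) :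
    ∃ ν : Measure (Euc n), IsProbabilityMeasure ν ∧
      (∃ g : Euc n → ℝ, ContinuousOn g (upperHemi n) ∧ (∀ x ∈ upperHemi n, 0 < g x) ∧
        ν = (sigmaPlus n).withDensity (fun x => ENNReal.ofReal (g x))) ∧
      ¬ ∃ T : Euc n → Euc n, (∀ x ∈ upperHemi n, T x ∈ upperHemi n) ∧
        Set.InjOn T (upperHemi n) ∧
        (∀ y ∈ upperHemi n, ∃ x ∈ upperHemi n, T x = y) ∧
        (∀ x ∈ upperHemi n, ∀ y ∈ upperHemi n, geod (T x) (T y) ≤ L * geod x y) ∧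
        Measure.map T (sigmaPlus n) = ν :=
  stmt17_general n hn L

end
end
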